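/- arXiv:2306.09791 — 2 statements merged into one kernel-verified Lean document; each statement's English description precedes it below -/
import Mathlib

section
/- For the Dykstra iteration and any z ∈ X and i ≥ n ≥ 0: ‖x_n − z‖² = ‖x_i − z‖² + ∑_{k=n}^{i−1}(‖x_k − x_{k+1}‖² + 2⟨x_{k−m+1} − x_{k+1}, q_{k−m+1}⟩) + 2∑_{k=i−m+1}^{i}⟨x_k − z, q_k⟩ − 2∑_{k=n−m+1}^{n}⟨x_k − z, q_k⟩. -/
/-!
The update rule gives `x j - x (j + 1) = q (j + 1) - q (j - m + 1)`. Expanding `‖x j - z‖²` around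
`x (j + 1)` therefore produces inner products with exactly the term entering and the term leaving the
sliding window `∑_{k = j-m+1}^{j} ⟪x k - z, q k⟫`. Hence `‖x j - z‖² + 2 ∑_{k = j-m+1}^{j} ⟪x k - z, q k⟫`
decreases from `j` to `j + 1` by `‖x j - x (j + 1)‖² + 2 ⟪x (j - m + 1) - x (j + 1), q (j - m + 1)⟫`,
and the identity follows by telescoping from `n` to `i`.
-/

open scoped RealInnerProductSpace
open Finset

theorem Int.sum_Ico_sub_add_one {M : Type*} [AddCommGroup M] (f : ℤ → M) {a b : ℤ} (hab : a ≤ b) :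
    ∑ k ∈ Ico a b, (f k - f (k + 1)) = f a - f b := by
  induction b, hab using Int.leInduction with
  | base => simp
  | succ b hab ih =>
    rw [← sum_Ico_add_eq_sum_Ico_add_one hab, ih]
    abel

theorem Int.sum_Icc_add_one_add_one_add {M : Type*} [AddCommMonoid M] (f : ℤ → M) {a b : ℤ}
    (h : a ≤ b + 1) :
    ∑ k ∈ Icc (a + 1) (b + 1), f k + f a = ∑ k ∈ Icc a b, f k + f (b + 1) := by
  rw [add_comm, ← sum_insert (by simp), insert_Icc_add_one_left_eq_Icc h,
    ← insert_Icc_right_eq_Icc_add_one h, sum_insert (by simp), add_comm]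

section Dykstra

variable {X : Type*} {m : ℕ} {x q : ℤ → X}

theorem dykstra_sub_add_one [AddCommGroup X]
    (hq : ∀ n : ℤ, 1 ≤ n → q n = x (n - 1) + q (n - m) - x n) {j : ℤ} (hj : 0 ≤ j) :
    x j - x (j + 1) = q (j + 1) - q (j - m + 1) := by
  rw [hq (j + 1) (by omega), add_sub_cancel_right, show j + 1 - m = j - m + 1 by ring]
  abel

variable [NormedAddCommGroup X] [InnerProductSpace ℝ X]

noncomputable def dykstraPotential (m : ℕ) (x q : ℤ → X) (z : X) (j : ℤ) : ℝ :=
  ‖x j - z‖ ^ 2 + 2 * ∑ k ∈ Icc (j - m + 1) j, ⟪x k - z, q k⟫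

theorem dykstraPotential_sub_add_one (hq : ∀ n : ℤ, 1 ≤ n → q n = x (n - 1) + q (n - m) - x n)
    (z : X) {j : ℤ} (hj : 0 ≤ j) :
    dykstraPotential m x q z j - dykstraPotential m x q z (j + 1) =
      ‖x j - x (j + 1)‖ ^ 2 + 2 * ⟪x (j - m + 1) - x (j + 1), q (j - m + 1)⟫ := by
  have hwindow := Int.sum_Icc_add_one_add_one_add (fun k ↦ ⟪x k - z, q k⟫)
    (a := j - m + 1) (b := j) (by omega)
  have hexpand : ‖x j - z‖ ^ 2 = ‖x (j + 1) - z‖ ^ 2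
      + 2 * ⟪x (j + 1) - z, x j - x (j + 1)⟫ + ‖x j - x (j + 1)‖ ^ 2 := by
    rw [← norm_add_sq_real, sub_add_sub_cancel']
  have hinner : ⟪x (j + 1) - z, x j - x (j + 1)⟫
      = ⟪x (j + 1) - z, q (j + 1)⟫ - ⟪x (j + 1) - z, q (j - m + 1)⟫ := by
    rw [dykstra_sub_add_one hq hj, inner_sub_right]
  have hcross : ⟪x (j - m + 1) - x (j + 1), q (j - m + 1)⟫
      = ⟪x (j - m + 1) - z, q (j - m + 1)⟫ - ⟪x (j + 1) - z, q (j - m + 1)⟫ := by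
    rw [← inner_sub_left, sub_sub_sub_cancel_right]
  rw [dykstraPotential, dykstraPotential, show j + 1 - m + 1 = j - m + 1 + 1 by ring]
  linarith

end Dykstra

theorem stmt_10_general
    (X : Type*) [NormedAddCommGroup X] [InnerProductSpace ℝ X]
    (m : ℕ)
    (x q : ℤ → X)
    (hqdef : ∀ n : ℤ, 1 ≤ n → q n = x (n - 1) + q (n - m) - x n)
    : ∀ z : X, ∀ n i : ℤ, 0 ≤ n → n ≤ i →
      ‖x n - z‖ ^ 2 = ‖x i - z‖ ^ 2
        + ∑ k ∈ Finset.Icc n (i - 1),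
            (‖x k - x (k + 1)‖ ^ 2 + 2 * ⟪x (k - m + 1) - x (k + 1), q (k - m + 1)⟫)
        + 2 * ∑ k ∈ Finset.Icc (i - m + 1) i, ⟪x k - z, q k⟫
        - 2 * ∑ k ∈ Finset.Icc (n - m + 1) n, ⟪x k - z, q k⟫ := by
  intro z n i hn hni
  have htelescope := Int.sum_Ico_sub_add_one (dykstraPotential m x q z) hni
  rw [← Icc_sub_one_right_eq_Ico,
    sum_congr rfl fun k hk ↦ dykstraPotential_sub_add_one hqdef z (hn.trans (mem_Icc.1 hk).1),
    dykstraPotential, dykstraPotential] at htelescope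
  linarith

theorem stmt_10
    (X : Type*) [NormedAddCommGroup X] [InnerProductSpace ℝ X]
    (m : ℕ) (hm : 2 ≤ m)
    (C : ℤ → Set X) (hCcl : ∀ n, IsClosed (C n)) (hCconv : ∀ n, Convex ℝ (C n))
    (hCne : (⋂ j ∈ Finset.Icc (1:ℤ) m, C j).Nonempty)
    (hCper : ∀ n : ℤ, C (n + m) = C n)
    (P : ℤ → X → X)
    (hP : ∀ j (y : X), P j y ∈ C j ∧ ∀ w ∈ C j, ‖y - P j y‖ ≤ ‖y - w‖)
    (x q : ℤ → X) (hq0 : ∀ k : ℤ, k ≤ 0 → q k = 0)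
    (hxdef : ∀ n : ℤ, 1 ≤ n → x n = P n (x (n - 1) + q (n - m)))
    (hqdef : ∀ n : ℤ, 1 ≤ n → q n = x (n - 1) + q (n - m) - x n)
    : ∀ z : X, ∀ n i : ℤ, 0 ≤ n → n ≤ i →
      ‖x n - z‖ ^ 2 = ‖x i - z‖ ^ 2
        + ∑ k ∈ Finset.Icc n (i - 1),
            (‖x k - x (k + 1)‖ ^ 2 + 2 * ⟪x (k - m + 1) - x (k + 1), q (k - m + 1)⟫)
        + 2 * ∑ k ∈ Finset.Icc (i - m + 1) i, ⟪x k - z, q k⟫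
        - 2 * ∑ k ∈ Finset.Icc (n - m + 1) n, ⟪x k - z, q k⟫ :=
  stmt_10_general X m x q hqdef
end

section
/- For the Dykstra iteration, if p ∈ ⋂_{j=1}^m C_j and b ≥ ‖x_0 − p‖, then for all n: ‖x_n − p‖ ≤ b and ∑_{k=0}^n ‖x_k − x_{k+1}‖² ≤ b². -/
/-!
Expanding `‖x₀ - z‖²` along the iteration gives the Boyle–Dykstra identity
`‖x₀ - z‖² = ‖xₙ - z‖² + ∑ₖ (‖xₖ - xₖ₊₁‖² + 2⟪qₖ₊₁₋ₘ, xₖ₊₁₋ₘ - xₖ₊₁⟫) + 2 ∑_{n-m < k ≤ n} ⟪qₖ, xₖ - z⟫`,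
valid for any sequences with `xₙ₋₁ - xₙ = qₙ - qₙ₋ₘ`. Each `qₖ` lies in the normal cone of `Cₖ` at `xₖ`,
and `xₖ₊₁ ∈ Cₖ₊₁ = Cₖ₊₁₋ₘ`, so for `z = p ∈ ⋂ Cⱼ` every inner product is nonnegative; dropping them
bounds both `‖xₙ - p‖²` and `∑ ‖xₖ - xₖ₊₁‖²` by `‖x₀ - p‖²`.
-/

open scoped RealInnerProductSpace

open Finset

theorem Function.Periodic.forall_mem_of_forall_mem_Icc {α : Type*} {C : ℤ → Set α} {m : ℕ}
    (hC : Function.Periodic C m) (hm : 0 < m) {p : α} (hp : ∀ j ∈ Icc (1 : ℤ) m, p ∈ C j)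
    (k : ℤ) : p ∈ C k := by
  obtain ⟨j, hj, hCj⟩ := hC.exists_mem_Ioc (by exact_mod_cast hm) k 0
  rw [hCj]
  exact hp j (by simp only [Set.mem_Ioc, zero_add] at hj; simp only [mem_Icc]; omega)

theorem sum_range_sub_add_one {M : Type*} [AddCommGroup M] (f : ℤ → M) (n : ℤ) (m : ℕ) :
    ∑ j ∈ range m, f (n + 1 - j) = ∑ j ∈ range m, f (n - j) + f (n + 1) - f (n + 1 - m) := by
  have htop := sum_range_succ (fun j : ℕ => f (n + 1 - j)) m
  have hbot := sum_range_succ' (fun j : ℕ => f (n + 1 - j)) m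
  simp only [Nat.cast_add, Nat.cast_one, Nat.cast_zero, sub_zero, add_sub_add_right_eq_sub]
    at hbot
  rw [eq_sub_iff_add_eq, ← htop, hbot]

section InnerProductSpace

variable {X : Type*} [NormedAddCommGroup X] [InnerProductSpace ℝ X]

theorem real_inner_sub_le_zero_of_forall_norm_sub_le {K : Set X} (hK : Convex ℝ K) {u v : X}
    (hv : v ∈ K) (hmin : ∀ w ∈ K, ‖u - v‖ ≤ ‖u - w‖) {w : X} (hw : w ∈ K) :
    ⟪u - v, w - v⟫ ≤ 0 := by
  have : Nonempty K := ⟨⟨v, hv⟩⟩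
  refine (norm_eq_iInf_iff_real_inner_le_zero hK hv).1 (le_antisymm ?_ ?_) w hw
  · exact le_ciInf fun w => hmin w w.2
  · exact ciInf_le ⟨0, by rintro _ ⟨w, rfl⟩; exact norm_nonneg _⟩ (⟨v, hv⟩ : K)

section Dykstra

variable {x q : ℤ → X} {m : ℕ}

theorem dykstra_norm_sq_eq (hq0 : ∀ k : ℤ, k ≤ 0 → q k = 0)
    (hrec : ∀ n : ℤ, 1 ≤ n → x (n - 1) - x n = q n - q (n - m)) (z : X) {n : ℤ} (hn : 0 ≤ n) :
    ‖x 0 - z‖ ^ 2 = ‖x n - z‖ ^ 2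
      + ∑ k ∈ Ico 0 n, (‖x k - x (k + 1)‖ ^ 2 + 2 * ⟪q (k + 1 - m), x (k + 1 - m) - x (k + 1)⟫)
      + 2 * ∑ j ∈ range m, ⟪q (n - j), x (n - j) - z⟫ := by
  induction n, hn using Int.leInduction with
  | base =>
    simp [hq0 _ (neg_nonpos.2 (Nat.cast_nonneg _))]
  | succ n hn ih =>
    have hstep : x n - x (n + 1) = q (n + 1) - q (n + 1 - m) := by
      simpa using hrec (n + 1) (by omega)
    have hexpand := norm_add_sq_real (x n - x (n + 1)) (x (n + 1) - z)
    rw [sub_add_sub_cancel] at hexpand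
    have hcross : ⟪x n - x (n + 1), x (n + 1) - z⟫ = ⟪q (n + 1), x (n + 1) - z⟫
        + ⟪q (n + 1 - m), x (n + 1 - m) - x (n + 1)⟫ - ⟪q (n + 1 - m), x (n + 1 - m) - z⟫ := by
      simp only [hstep, inner_sub_left, inner_sub_right]
      ring
    rw [← insert_Ico_right_eq_Ico_add_one hn, sum_insert right_notMem_Ico,
      sum_range_sub_add_one (fun k => ⟪q k, x k - z⟫)]
    linarith

theorem dykstra_norm_sq_add_sum_le (hq0 : ∀ k : ℤ, k ≤ 0 → q k = 0)
    (hrec : ∀ n : ℤ, 1 ≤ n → x (n - 1) - x n = q n - q (n - m)) {z : X}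
    (hcross : ∀ k : ℤ, 1 ≤ k → 0 ≤ ⟪q (k - m), x (k - m) - x k⟫)
    (hwindow : ∀ k : ℤ, 0 ≤ ⟪q k, x k - z⟫) {n : ℤ} (hn : 0 ≤ n) :
    ‖x n - z‖ ^ 2 + ∑ k ∈ Ico 0 n, ‖x k - x (k + 1)‖ ^ 2 ≤ ‖x 0 - z‖ ^ 2 := by
  have hcross_sum : 0 ≤ ∑ k ∈ Ico 0 n, ⟪q (k + 1 - m), x (k + 1 - m) - x (k + 1)⟫ :=
    sum_nonneg fun k hk => hcross (k + 1) (by simp only [mem_Ico] at hk; omega)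
  have hwindow_sum : 0 ≤ ∑ j ∈ range m, ⟪q (n - j), x (n - j) - z⟫ :=
    sum_nonneg fun j _ => hwindow _
  rw [dykstra_norm_sq_eq hq0 hrec z hn, sum_add_distrib, ← mul_sum]
  linarith

variable {C : ℤ → Set X}

theorem dykstra_cross_nonneg (hq0 : ∀ k : ℤ, k ≤ 0 → q k = 0)
    (hCper : Function.Periodic C m) (hxC : ∀ n : ℤ, 1 ≤ n → x n ∈ C n)
    (hnormal : ∀ n : ℤ, 1 ≤ n → ∀ w ∈ C n, ⟪q n, w - x n⟫ ≤ 0) {k : ℤ} (hk : 1 ≤ k) :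
    0 ≤ ⟪q (k - m), x (k - m) - x k⟫ := by
  rcases le_or_gt (k - m) 0 with hkm | hkm
  · simp [hq0 _ hkm]
  · have hxk : x k ∈ C (k - m) := by
      rw [← hCper (k - m), sub_add_cancel]
      exact hxC k hk
    rw [← neg_sub (x k), inner_neg_right, neg_nonneg]
    exact hnormal _ (by omega) _ hxk

theorem dykstra_window_nonneg (hq0 : ∀ k : ℤ, k ≤ 0 → q k = 0)
    (hnormal : ∀ n : ℤ, 1 ≤ n → ∀ w ∈ C n, ⟪q n, w - x n⟫ ≤ 0) {z : X}
    (hz : ∀ n : ℤ, 1 ≤ n → z ∈ C n) (k : ℤ) : 0 ≤ ⟪q k, x k - z⟫ := by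
  rcases le_or_gt k 0 with hk | hk
  · simp [hq0 k hk]
  · rw [← neg_sub z, inner_neg_right, neg_nonneg]
    exact hnormal k hk z (hz k hk)

end Dykstra

end InnerProductSpace

theorem stmt_12_general
    (X : Type*) [NormedAddCommGroup X] [InnerProductSpace ℝ X]
    (m : ℕ) (hm : 2 ≤ m)
    (C : ℤ → Set X) (hCconv : ∀ n, Convex ℝ (C n))
    (hCper : ∀ n : ℤ, C (n + m) = C n)
    (P : ℤ → X → X)
    (hP : ∀ j (y : X), P j y ∈ C j ∧ ∀ w ∈ C j, ‖y - P j y‖ ≤ ‖y - w‖)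
    (x q : ℤ → X) (hq0 : ∀ k : ℤ, k ≤ 0 → q k = 0)
    (hxdef : ∀ n : ℤ, 1 ≤ n → x n = P n (x (n - 1) + q (n - m)))
    (hqdef : ∀ n : ℤ, 1 ≤ n → q n = x (n - 1) + q (n - m) - x n)
    (p : X) (hp : ∀ j ∈ Finset.Icc (1:ℤ) m, p ∈ C j)
    (b : ℕ) (hb : ‖x 0 - p‖ ≤ (b : ℝ))
    : ∀ n : ℤ, 0 ≤ n →
      ‖x n - p‖ ≤ (b : ℝ) ∧
      ∑ k ∈ Finset.Icc 0 n, ‖x k - x (k + 1)‖ ^ 2 ≤ (b : ℝ) ^ 2 := by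
  have hrec : ∀ n : ℤ, 1 ≤ n → x (n - 1) - x n = q n - q (n - m) := fun n hn => by
    rw [hqdef n hn]; abel
  have hxC : ∀ n : ℤ, 1 ≤ n → x n ∈ C n := fun n hn => hxdef n hn ▸ (hP n _).1
  have hnormal : ∀ n : ℤ, 1 ≤ n → ∀ w ∈ C n, ⟪q n, w - x n⟫ ≤ 0 := fun n hn w hw => by
    rw [hqdef n hn, hxdef n hn]
    exact real_inner_sub_le_zero_of_forall_norm_sub_le (hCconv n) (hP n _).1 (hP n _).2 hw
  have hpC : ∀ k : ℤ, p ∈ C k := Function.Periodic.forall_mem_of_forall_mem_Icc hCper (by omega) hp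
  have hbound : ∀ n : ℤ, 0 ≤ n → ‖x n - p‖ ^ 2 + ∑ k ∈ Ico 0 n, ‖x k - x (k + 1)‖ ^ 2 ≤ b ^ 2 :=
    fun n hn => (dykstra_norm_sq_add_sum_le hq0 hrec
      (fun k hk => dykstra_cross_nonneg hq0 hCper hxC hnormal hk)
      (dykstra_window_nonneg hq0 hnormal fun k _ => hpC k) hn).trans
      (pow_le_pow_left₀ (norm_nonneg _) hb 2)
  intro n hn
  constructor
  · have hsum : 0 ≤ ∑ k ∈ Ico 0 n, ‖x k - x (k + 1)‖ ^ 2 := sum_nonneg fun _ _ => sq_nonneg _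
    exact (pow_le_pow_iff_left₀ (norm_nonneg _) b.cast_nonneg two_ne_zero).1
      (by linarith [hbound n hn])
  · rw [← Ico_add_one_right_eq_Icc]
    linarith [hbound (n + 1) (by omega), sq_nonneg ‖x (n + 1) - p‖]

theorem stmt_12
    (X : Type*) [NormedAddCommGroup X] [InnerProductSpace ℝ X]
    (m : ℕ) (hm : 2 ≤ m)
    (C : ℤ → Set X) (hCcl : ∀ n, IsClosed (C n)) (hCconv : ∀ n, Convex ℝ (C n))
    (hCne : (⋂ j ∈ Finset.Icc (1:ℤ) m, C j).Nonempty)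
    (hCper : ∀ n : ℤ, C (n + m) = C n)
    (P : ℤ → X → X)
    (hP : ∀ j (y : X), P j y ∈ C j ∧ ∀ w ∈ C j, ‖y - P j y‖ ≤ ‖y - w‖)
    (x q : ℤ → X) (hq0 : ∀ k : ℤ, k ≤ 0 → q k = 0)
    (hxdef : ∀ n : ℤ, 1 ≤ n → x n = P n (x (n - 1) + q (n - m)))
    (hqdef : ∀ n : ℤ, 1 ≤ n → q n = x (n - 1) + q (n - m) - x n)
    (p : X) (hp : ∀ j ∈ Finset.Icc (1:ℤ) m, p ∈ C j)
    (b : ℕ) (hb1 : 1 ≤ b) (hb : ‖x 0 - p‖ ≤ (b : ℝ))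
    : ∀ n : ℤ, 0 ≤ n →
      ‖x n - p‖ ≤ (b : ℝ) ∧
      ∑ k ∈ Finset.Icc 0 n, ‖x k - x (k + 1)‖ ^ 2 ≤ (b : ℝ) ^ 2 :=
  stmt_12_general X m hm C hCconv hCper P hP x q hq0 hxdef hqdef p hp b hb
end
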